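/- Let p be prime, q = p^d, 3 ≤ l ≤ q, and let M_Z be the integer (q-l+1) × (q-1) matrix of coefficient vectors of (1+x)^l - 1, x(1+x)^l, ..., x^{q-l-1}(1+x)^l, x^{q-l}(1+x)^l - x^q. Then the p-adic elementary divisors (Smith normal form over Z_p) of M_Z consist of q-l units and exactly one entry divisible by p (equivalently, M_Z ⊗ Q has rank q-l+1 while M_Z ⊗ F_p has rank q-l). -/

import Mathlib

/-!
Row `i` of `M` is the coefficient vector of `xⁱ(1+x)ˡ` in degrees `1, …, q-1`, so rows
`1, …, q-l` are unitriangular in the first `q-l` columns. Over any ring they clear those columns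
from row `0`, leaving a vector `v` supported on the last `l-1` columns. Over `𝔽_p` the identity
`(1+x)^(q-l) (1+x)^l = 1 + x^q` makes row `0` a combination of the others, which forces
`v ≡ 0 (mod p)`. Over `ℤ_p` all rows are independent: a combination `g(x)(1+x)^l` lying in
`span {1, x^q}` is divisible by `(1+x)²`, which in characteristic zero kills it; hence `v ≠ 0`.
Writing `v = δ w` with `δ` an entry of least valuation, `w` has an entry `1` outside the first
`q-l` columns, and `w` together with rows `1, …, q-l` and unit vectors forms an invertible matrix,
unitriangular up to a column swap. This gives the Smith form `diag(1, …, 1, δ)` with `p ∣ δ ≠ 0`.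
-/

open Polynomial

/-- The `i`-th row polynomial of the paper's matrix `M` (equation (3)):
`(1+x)^l - 1` for `i = 0`, `x^(q-l)(1+x)^l - x^q` for `i = q-l`, and
`x^i (1+x)^l` for `0 < i < q-l`. -/
noncomputable def rowPoly (R : Type*) [CommRing R] (q l i : ℕ) : R[X] :=
  if i = 0 then (1 + X) ^ l - 1
  else if i = q - l then X ^ (q - l) * (1 + X) ^ l - X ^ q
  else X ^ i * (1 + X) ^ l

/-- The paper's `(q-l+1) × (q-1)` matrix `M`: the `(i, j)` entry is the
coefficient of `x^(j+1)` in the `i`-th row polynomial, i.e. the rows are the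
coefficient vectors (in degrees `1` through `q-1`) of the polynomials
`(1+x)^l - 1, x(1+x)^l, ..., x^(q-l-1)(1+x)^l, x^(q-l)(1+x)^l - x^q`. -/
noncomputable def paperM (R : Type*) [CommRing R] (q l : ℕ) :
    Matrix (Fin (q - l + 1)) (Fin (q - 1)) R :=
  fun i j => (rowPoly R q l i).coeff ((j : ℕ) + 1)

theorem PreValuationRing.exists_dvd_forall {R ι : Type*} [Monoid R] [PreValuationRing R]
    [Finite ι] [Nonempty ι] (v : ι → R) : ∃ i, ∀ j, v i ∣ v j := by
  have := Fintype.ofFinite ι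
  suffices h : ∀ s : Finset ι, s.Nonempty → ∃ i ∈ s, ∀ j ∈ s, v i ∣ v j by
    obtain ⟨i, -, hi⟩ := h Finset.univ Finset.univ_nonempty
    exact ⟨i, fun j => hi j (Finset.mem_univ j)⟩
  intro s hs
  induction hs using Finset.Nonempty.cons_induction with
  | singleton a => exact ⟨a, by simp⟩
  | cons a s ha hs ih =>
    obtain ⟨i, hi, hdvd⟩ := ih
    rcases ValuationRing.dvd_total (v i) (v a) with h | h
    · exact ⟨i, by simp [hi], by simpa [h] using hdvd⟩
    · exact ⟨a, by simp, by simpa using fun j hj => h.trans (hdvd j hj)⟩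

namespace Polynomial

variable {R : Type*} [CommRing R] [IsDomain R] [CharZero R]

theorem eq_zero_of_one_add_X_sq_dvd {q : ℕ} (hq : q ≠ 0) {a b : R}
    (h : (1 + X) ^ 2 ∣ C a + C b * X ^ q) : a = 0 ∧ b = 0 := by
  obtain ⟨G, hG⟩ := h
  have hb0 : b = 0 := by
    have := congrArg (fun F => (derivative F).eval (-1)) hG
    simpa [derivative_X_pow, derivative_pow, hq] using this
  refine ⟨?_, hb0⟩
  simpa [hb0] using congrArg (eval (-1)) hG

theorem eq_zero_of_coeff_mul_one_add_X_pow_eq_zero {g : R[X]} {l q : ℕ} (hl : 2 ≤ l)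
    (hlq : l ≤ q) (hg : g.natDegree ≤ q - l)
    (hcoeff : ∀ k, 0 < k → k < q → (g * (1 + X) ^ l).coeff k = 0) : g = 0 := by
  set F := g * (1 + X) ^ l
  have hdeg : F.natDegree ≤ q := by
    refine natDegree_mul_le.trans ?_
    have : ((1 + X : R[X]) ^ l).natDegree ≤ l := by
      rw [add_comm, ← C_1, natDegree_pow, natDegree_X_add_C, mul_one]
    omega
  have hF : F = C (F.coeff 0) + C (F.coeff q) * X ^ q := by
    ext k
    simp only [coeff_add, coeff_C, coeff_C_mul_X_pow]
    rcases Nat.eq_zero_or_pos k with rfl | hk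
    · simp [show (0 : ℕ) ≠ q by omega]
    rcases lt_trichotomy k q with hkq | rfl | hkq
    · simp [hk.ne', hkq.ne, hcoeff k hk hkq]
    · simp [hk.ne']
    · simp [hk.ne', hkq.ne', coeff_eq_zero_of_natDegree_lt (hdeg.trans_lt hkq)]
  have hdvd : (1 + X) ^ 2 ∣ C (F.coeff 0) + C (F.coeff q) * X ^ q := by
    rw [← hF]
    exact dvd_mul_of_dvd_right (pow_dvd_pow _ hl) g
  obtain ⟨h0, hq⟩ := eq_zero_of_one_add_X_sq_dvd (show q ≠ 0 by omega) hdvd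
  have hF0 : F = 0 := by rw [hF, h0, hq]; simp
  refine (mul_eq_zero.mp hF0).resolve_right (pow_ne_zero _ ?_)
  rw [add_comm]
  exact X_add_C_ne_zero 1

end Polynomial

namespace Matrix

variable {R : Type*} [CommRing R] {m n : ℕ}

def SuccRowsUnitriangular (M : Matrix (Fin (m + 1)) (Fin n) R) : Prop :=
  ∀ (k : Fin m) (j : Fin n), (j : ℕ) ≤ k → M k.succ j = if (j : ℕ) = k then 1 else 0

namespace SuccRowsUnitriangular

variable {M : Matrix (Fin (m + 1)) (Fin n) R}

theorem det_submatrix (hM : M.SuccRowsUnitriangular) (hmn : m ≤ n) :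
    (M.submatrix Fin.succ (Fin.castLE hmn)).det = 1 := by
  rw [det_of_isUpperTriangular]
  · exact Finset.prod_eq_one fun k _ => by simp [hM k (Fin.castLE hmn k) le_rfl]
  · intro k j (hjk : j < k)
    simp [hM k (Fin.castLE hmn j) hjk.le, Fin.val_ne_of_ne hjk.ne]

theorem isUnit_submatrix (hM : M.SuccRowsUnitriangular) (hmn : m ≤ n) :
    IsUnit (M.submatrix Fin.succ (Fin.castLE hmn)) := by
  rw [isUnit_iff_isUnit_det, hM.det_submatrix hmn]
  exact isUnit_one

theorem linearIndependent_succ (hM : M.SuccRowsUnitriangular) (hmn : m ≤ n) :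
    LinearIndependent R fun k : Fin m => M k.succ := by
  rw [Fintype.linearIndependent_iff]
  intro c hc
  have hcT : vecMul c (M.submatrix Fin.succ (Fin.castLE hmn)) = 0 := by
    ext j
    simpa [vecMul, dotProduct, Finset.sum_apply] using congrFun hc (Fin.castLE hmn j)
  exact congrFun (vecMul_injective_of_isUnit (hM.isUnit_submatrix hmn)
    (hcT.trans (zero_vecMul _).symm))

theorem rank_eq {K : Type*} [Field K] {M : Matrix (Fin (m + 1)) (Fin n) K}
    (hM : M.SuccRowsUnitriangular) (hmn : m ≤ n)
    (h0 : M 0 ∈ Submodule.span K (Set.range fun k : Fin m => M k.succ)) : M.rank = m := by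
  have hrows : Set.range M.row = insert (M 0) (Set.range fun k : Fin m => M k.succ) := by
    rw [← Fin.cons_self_tail M.row, Fin.range_cons]
    rfl
  rw [rank_eq_finrank_span_row, hrows, Submodule.span_insert_eq_span h0,
    finrank_span_eq_card (hM.linearIndependent_succ hmn), Fintype.card_fin]

theorem row_zero_sub_sum_mem (hM : M.SuccRowsUnitriangular) (hmn : m ≤ n) (I : Ideal R)
    {a c : Fin m → R} (hc : ∀ j, M 0 j - ∑ k, c k * M k.succ j ∈ I)
    (ha : vecMul a (M.submatrix Fin.succ (Fin.castLE hmn)) = fun j => M 0 (Fin.castLE hmn j))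
    (j : Fin n) : M 0 j - ∑ k, a k * M k.succ j ∈ I := by
  set T := M.submatrix Fin.succ (Fin.castLE hmn)
  have vecMul_mem : ∀ (x : Fin m → R) (N : Matrix (Fin m) (Fin m) R), (∀ i, x i ∈ I) →
      ∀ i, vecMul x N i ∈ I := fun x N hx i =>
    show ∑ k, x k * N k i ∈ I from I.sum_mem fun k _ => I.mul_mem_right _ (hx k)
  have hcaT : ∀ i, vecMul (c - a) T i ∈ I := by
    intro i
    rw [sub_vecMul, Pi.sub_apply, ha]
    convert I.neg_mem (hc (Fin.castLE hmn i)) using 1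
    simp [T, vecMul, dotProduct]
  have hca : ∀ i, (c - a) i ∈ I := by
    have h := vecMul_mem _ T⁻¹ hcaT
    rwa [vecMul_vecMul, mul_nonsing_inv _ ((isUnit_iff_isUnit_det T).mp
      (hM.isUnit_submatrix hmn)), vecMul_one] at h
  have hsplit : M 0 j - ∑ k, a k * M k.succ j =
      (M 0 j - ∑ k, c k * M k.succ j) + ∑ k, (c - a) k * M k.succ j := by
    simp only [Pi.sub_apply, sub_mul, Finset.sum_sub_distrib]
    ring
  rw [hsplit]
  exact I.add_mem (hc j) (I.sum_mem fun k _ => I.mul_mem_right _ (hca k))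

end SuccRowsUnitriangular

theorem exists_isUnit_mul_reduce_row_zero {ι : Type*} (a : Fin m → R)
    (N : Matrix (Fin (m + 1)) ι R) :
    ∃ A : Matrix (Fin (m + 1)) (Fin (m + 1)) R, IsUnit A ∧
      (∀ (k : Fin m) j, (A * N) k.castSucc j = N k.succ j) ∧
      ∀ j, (A * N) (Fin.last m) j = N 0 j - ∑ k, a k * N k.succ j := by
  set A₀ : Matrix (Fin (m + 1)) (Fin (m + 1)) R := (1 : Matrix _ _ R).updateRow 0 (Fin.cons 1 (-a))
  have hA₀ : A₀.det = 1 := by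
    rw [det_of_isUpperTriangular]
    · refine Finset.prod_eq_one fun i _ => ?_
      rcases eq_or_ne i 0 with rfl | hi
      · simp [A₀]
      · simp [A₀, hi]
    · intro i j (hji : j < i)
      simp [A₀, Fin.ne_zero_of_lt hji, hji.ne']
  have hA₀N : ∀ i j, (A₀ * N) i j = if i = 0 then N 0 j - ∑ k, a k * N k.succ j else N i j := by
    intro i j
    rcases eq_or_ne i 0 with rfl | hi
    · simp [A₀, mul_apply, Fin.sum_univ_succ, sub_eq_add_neg]
    · simp [A₀, mul_apply, one_apply, hi]
  refine ⟨A₀.submatrix (finRotate (m + 1)) id, ?_, fun k j => ?_, fun j => ?_⟩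
  · rw [isUnit_iff_isUnit_det, det_permute, hA₀, mul_one]
    exact (Units.isUnit (Equiv.Perm.sign _)).map (Int.castRingHom R)
  · change (A₀ * N) (finRotate (m + 1) k.castSucc) j = _
    rw [hA₀N, finRotate_apply, Fin.coeSucc_eq_succ, if_neg (Fin.succ_ne_zero k)]
  · change (A₀ * N) (finRotate (m + 1) (Fin.last m)) j = _
    rw [hA₀N, finRotate_last, if_pos rfl]

theorem exists_isUnit_castLE_row_eq {k : ℕ} (hkn : k ≤ n) (r : Fin k → Fin n → R)
    (σ : Equiv.Perm (Fin n))
    (hr : ∀ (i : Fin k) (j : Fin n), (j : ℕ) ≤ i → r i (σ j) = if (j : ℕ) = i then 1 else 0) :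
    ∃ C : Matrix (Fin n) (Fin n) R, IsUnit C ∧ ∀ i j, C (Fin.castLE hkn i) j = r i j := by
  set U : Matrix (Fin n) (Fin n) R :=
    of fun i j => if h : (i : ℕ) < k then r ⟨i, h⟩ (σ j) else if j = i then 1 else 0
  have hU : U.det = 1 := by
    rw [det_of_isUpperTriangular]
    · refine Finset.prod_eq_one fun i _ => ?_
      by_cases h : (i : ℕ) < k
      · simp [U, h, hr ⟨i, h⟩ i le_rfl]
      · simp [U, h]
    · intro i j (hji : j < i)
      by_cases h : (i : ℕ) < k
      · simp [U, h, hr ⟨i, h⟩ j hji.le, Fin.val_ne_of_ne hji.ne]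
      · simp [U, h, hji.ne]
  refine ⟨U.submatrix id σ.symm, ?_, fun i j => ?_⟩
  · rw [isUnit_iff_isUnit_det, det_permute', hU, mul_one]
    exact (Units.isUnit (Equiv.Perm.sign _)).map (Int.castRingHom R)
  · simp [U]

theorem exists_isUnit_mul_eq_of_rows {k : ℕ} (hkn : k ≤ n) (N : Matrix (Fin k) (Fin n) R)
    (e : Fin k → R) (r : Fin k → Fin n → R) (σ : Equiv.Perm (Fin n))
    (hr : ∀ (i : Fin k) (j : Fin n), (j : ℕ) ≤ i → r i (σ j) = if (j : ℕ) = i then 1 else 0)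
    (hN : ∀ i j, N i j = e i * r i j) :
    ∃ B : Matrix (Fin n) (Fin n) R, IsUnit B ∧
      N * B = of fun (i : Fin k) (j : Fin n) => if (j : ℕ) = i then e i else 0 := by
  obtain ⟨C, hC, hCr⟩ := exists_isUnit_castLE_row_eq hkn r σ hr
  have hNC : N = (of fun (i : Fin k) (j : Fin n) => if (j : ℕ) = i then e i else 0) * C := by
    ext i j
    rw [mul_apply, Finset.sum_eq_single (Fin.castLE hkn i)]
    · simp [hN, hCr]
    · intro b _ hb
      simp [show (b : ℕ) ≠ i from fun h => hb (Fin.ext h)]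
    · simp
  refine ⟨↑hC.unit⁻¹, Units.isUnit _, ?_⟩
  rw [hNC, Matrix.mul_assoc, IsUnit.mul_val_inv, Matrix.mul_one]

theorem SuccRowsUnitriangular.exists_smith_form {M : Matrix (Fin (m + 1)) (Fin n) R}
    (hM : M.SuccRowsUnitriangular) (hmn : m < n) (a : Fin m → R) (d : R) (w : Fin n → R)
    (j₀ : Fin n) (hj₀ : m ≤ j₀) (hw : ∀ j : Fin n, (j : ℕ) < m → w j = 0) (hwj₀ : w j₀ = 1)
    (hv : ∀ j, M 0 j - ∑ k, a k * M k.succ j = d * w j) :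
    ∃ (A : Matrix (Fin (m + 1)) (Fin (m + 1)) R) (B : Matrix (Fin n) (Fin n) R),
      IsUnit A ∧ IsUnit B ∧ A * M * B = of fun (i : Fin (m + 1)) (j : Fin n) =>
        if (j : ℕ) = i then (if i = Fin.last m then d else 1) else 0 := by
  obtain ⟨A, hA, hAM, hAM_last⟩ := exists_isUnit_mul_reduce_row_zero a M
  -- the swap moves the pivot `1` of `w` into column `m`, just after the pivots of rows `1, …, m`
  set σ := Equiv.swap (⟨m, hmn⟩ : Fin n) j₀
  have hσ : ∀ j : Fin n, (j : ℕ) < m → σ j = j := fun j hj =>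
    Equiv.swap_apply_of_ne_of_ne (Fin.ne_of_val_ne hj.ne) (Fin.ne_of_val_ne (by omega))
  set r : Fin (m + 1) → Fin n → R := Fin.lastCases w fun k => M k.succ
  have hr : ∀ (i : Fin (m + 1)) (j : Fin n), (j : ℕ) ≤ i →
      r i (σ j) = if (j : ℕ) = i then 1 else 0 := by
    intro i j hji
    induction i using Fin.lastCases with
    | last =>
      simp only [r, Fin.lastCases_last]
      rcases (show (j : ℕ) ≤ m by simpa using hji).lt_or_eq with hj | hj
      · rw [hσ j hj, hw j hj, if_neg (by simp; omega)]
      · rw [show j = ⟨m, hmn⟩ from Fin.ext hj, Equiv.swap_apply_left, hwj₀, if_pos (by simp)]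
    | cast k =>
      simp only [r, Fin.lastCases_castSucc]
      rw [hσ j (by simp at hji; omega)]
      exact hM k j hji
  have hAMr : ∀ i j, (A * M) i j = (if i = Fin.last m then d else 1) * r i j := by
    intro i j
    induction i using Fin.lastCases with
    | last => simp [r, hAM_last, hv]
    | cast k => simp [r, hAM, Fin.castSucc_ne_last k]
  obtain ⟨B, hB, hAMB⟩ := exists_isUnit_mul_eq_of_rows hmn (A * M) _ r σ hr hAMr
  exact ⟨A, B, hA, hB, hAMB⟩

theorem SuccRowsUnitriangular.exists_smith_form_of_row_zero_mem [IsDomain R] [ValuationRing R]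
    {M : Matrix (Fin (m + 1)) (Fin n) R} (hM : M.SuccRowsUnitriangular) (hmn : m < n)
    (hli : LinearIndependent R M.row) (I : Ideal R) (c : Fin m → R)
    (hc : ∀ j, M 0 j - ∑ k, c k * M k.succ j ∈ I) :
    ∃ (A : Matrix (Fin (m + 1)) (Fin (m + 1)) R) (B : Matrix (Fin n) (Fin n) R) (d : R),
      IsUnit A ∧ IsUnit B ∧ A * M * B = of (fun (i : Fin (m + 1)) (j : Fin n) =>
          if (j : ℕ) = i then (if i = Fin.last m then d else 1) else 0) ∧ d ≠ 0 ∧ d ∈ I := by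
  obtain ⟨a, ha⟩ := vecMul_surjective_iff_isUnit.mpr (hM.isUnit_submatrix hmn.le)
    fun j => M 0 (Fin.castLE hmn.le j)
  set v : Fin n → R := fun j => M 0 j - ∑ k, a k * M k.succ j
  have hv_block : ∀ j : Fin n, (j : ℕ) < m → v j = 0 := fun j hj =>
    sub_eq_zero.mpr (congrFun ha ⟨j, hj⟩).symm
  have hv : v ≠ 0 := by
    intro hv
    refine hli.notMem_span_image (s := {i | i ≠ 0}) (x := 0) (by simp) ?_
    have hrow : M 0 = ∑ k, a k • M k.succ := by
      ext j
      simpa [v, sub_eq_zero, Finset.sum_apply] using congrFun hv j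
    change M 0 ∈ _
    rw [hrow]
    exact Submodule.sum_mem _ fun k _ =>
      Submodule.smul_mem _ _ (Submodule.subset_span ⟨k.succ, Fin.succ_ne_zero k, rfl⟩)
  have : Nonempty (Fin n) := ⟨⟨0, by omega⟩⟩
  obtain ⟨j₀, hj₀⟩ := PreValuationRing.exists_dvd_forall v
  choose w hw using hj₀
  have hd : v j₀ ≠ 0 := fun h => hv (funext fun j => by rw [hw j, h, zero_mul]; rfl)
  obtain ⟨A, B, hA, hB, hAMB⟩ := hM.exists_smith_form hmn a (v j₀) w j₀
    (not_lt.mp fun h => hd (hv_block j₀ h))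
    (fun j hj => (mul_eq_zero.mp ((hw j).symm.trans (hv_block j hj))).resolve_left hd)
    ((mul_eq_left₀ hd).mp (hw j₀).symm) hw
  exact ⟨A, B, v j₀, hA, hB, hAMB, hd, hM.row_zero_sub_sum_mem hmn.le I hc ha j₀⟩

end Matrix

section paperM

variable (R : Type*) [CommRing R] {q l : ℕ}

theorem paperM_apply (i : Fin (q - l + 1)) (j : Fin (q - 1)) :
    paperM R q l i j = (X ^ (i : ℕ) * (1 + X) ^ l : R[X]).coeff ((j : ℕ) + 1) := by
  have hjq : (j : ℕ) + 1 ≠ q := by omega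
  simp only [paperM, rowPoly]
  split_ifs with h0 hq
  · simp [h0, coeff_one]
  · simp [hq, coeff_X_pow, hjq]
  · rfl

theorem paperM_map_apply {S : Type*} [CommRing S] (f : R →+* S) (i : Fin (q - l + 1))
    (j : Fin (q - 1)) : f (paperM R q l i j) = paperM S q l i j := by
  rw [paperM_apply, paperM_apply, ← coeff_map]
  simp

theorem paperM_map_intCast : (paperM ℤ q l).map (Int.cast : ℤ → R) = paperM R q l := by
  ext i j
  exact paperM_map_apply ℤ (Int.castRingHom R) i j

theorem paperM_succRowsUnitriangular : (paperM R q l).SuccRowsUnitriangular := by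
  intro k j hjk
  rw [paperM_apply, coeff_X_pow_mul', Fin.val_succ]
  rcases (show (j : ℕ) ≤ k from hjk).lt_or_eq with h | h
  · simp [h.ne, show ¬ (k : ℕ) + 1 ≤ j + 1 by omega]
  · simp [h, coeff_one_add_X_pow]

theorem paperM_row_linearIndependent [IsDomain R] [CharZero R] (hl : 2 ≤ l) (hlq : l ≤ q) :
    LinearIndependent R (paperM R q l).row := by
  rw [Fintype.linearIndependent_iff]
  intro c hc
  set g : R[X] := ∑ i, C (c i) * X ^ (i : ℕ)
  have hg : g = 0 := by
    refine eq_zero_of_coeff_mul_one_add_X_pow_eq_zero hl hlq ?_ fun k hk hkq => ?_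
    · refine natDegree_sum_le_of_forall_le _ _ fun i _ => (natDegree_C_mul_X_pow_le _ _).trans ?_
      omega
    · have := congrFun hc ⟨k - 1, by omega⟩
      simp only [Finset.sum_apply, Pi.smul_apply, smul_eq_mul, Pi.zero_apply, Matrix.row,
        paperM_apply, Nat.sub_add_cancel hk] at this
      simpa [g, Finset.sum_mul, finsetSum_coeff, mul_assoc] using this
  intro i
  simpa [g, finsetSum_coeff, coeff_C_mul_X_pow, Fin.val_inj] using congrArg (coeff · i) hg

theorem paperM_sum_choose_mul (p : ℕ) [Fact p.Prime] [CharP R p] {d : ℕ} (hq : q = p ^ d)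
    (hlq : l ≤ q) (j : Fin (q - 1)) :
    ∑ i : Fin (q - l + 1), ((q - l).choose i : R) * paperM R q l i j = 0 := by
  have hbinom : ∑ i : Fin (q - l + 1), C ((q - l).choose i : R) * X ^ (i : ℕ) =
      (1 + X) ^ (q - l) := by
    rw [add_comm (1 : R[X]) X, add_pow, ← Fin.sum_univ_eq_sum_range]
    simp [mul_comm]
  have hchar : (1 + X : R[X]) ^ q = 1 + X ^ q := by rw [hq, add_pow_char_pow, one_pow]
  calc ∑ i : Fin (q - l + 1), ((q - l).choose i : R) * paperM R q l i j
      = ((1 + X) ^ (q - l) * (1 + X) ^ l : R[X]).coeff ((j : ℕ) + 1) := by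
        simp [← hbinom, Finset.sum_mul, finsetSum_coeff, paperM_apply, mul_assoc]
    _ = (1 + X ^ q : R[X]).coeff ((j : ℕ) + 1) := by
        rw [← pow_add, Nat.sub_add_cancel hlq, hchar]
    _ = 0 := by
        simp [coeff_one, coeff_X_pow]
        omega

theorem paperM_row_zero_apply (p : ℕ) [Fact p.Prime] [CharP R p] {d : ℕ} (hq : q = p ^ d)
    (hlq : l ≤ q) (j : Fin (q - 1)) :
    paperM R q l 0 j =
      ∑ k : Fin (q - l), -((q - l).choose (k + 1) : R) * paperM R q l k.succ j := by
  have h := paperM_sum_choose_mul R p hq hlq j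
  rw [Fin.sum_univ_succ] at h
  simp only [Fin.val_zero, Nat.choose_zero_right, Nat.cast_one, one_mul, Fin.val_succ] at h
  simp only [neg_mul, Finset.sum_neg_distrib]
  linear_combination h

theorem paperM_row_zero_mem_span (p : ℕ) [Fact p.Prime] [CharP R p] {d : ℕ} (hq : q = p ^ d)
    (hlq : l ≤ q) :
    paperM R q l 0 ∈ Submodule.span R (Set.range fun k : Fin (q - l) => paperM R q l k.succ) := by
  rw [Submodule.mem_span_range_iff_exists_fun]
  refine ⟨fun k => -((q - l).choose (k + 1) : R), funext fun j => ?_⟩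
  simp [Finset.sum_apply, paperM_row_zero_apply R p hq hlq j]

theorem paperM_padicInt_row_zero_sub_mem (p : ℕ) [Fact p.Prime] {d : ℕ} (hq : q = p ^ d)
    (hlq : l ≤ q) (j : Fin (q - 1)) :
    paperM ℤ_[p] q l 0 j -
        ∑ k : Fin (q - l), -((q - l).choose (k + 1) : ℤ_[p]) * paperM ℤ_[p] q l k.succ j ∈
      Ideal.span {(p : ℤ_[p])} := by
  rw [← PadicInt.maximalIdeal_eq_span_p, ← PadicInt.ker_toZMod, RingHom.mem_ker]
  simp only [map_sub, map_sum, map_mul, map_neg, map_natCast, paperM_map_apply]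
  rw [paperM_row_zero_apply (ZMod p) p hq hlq, sub_self]

end paperM

theorem paperM_smith_normal_form_general (p : ℕ) [Fact p.Prime] (d l q : ℕ)
    (hq : q = p ^ d) (hl : 3 ≤ l) (hlq : l ≤ q) :
    (∃ (A : Matrix (Fin (q - l + 1)) (Fin (q - l + 1)) ℤ_[p])
       (B : Matrix (Fin (q - 1)) (Fin (q - 1)) ℤ_[p])
       (e : Fin (q - l + 1) → ℤ_[p]),
      IsUnit A ∧ IsUnit B ∧
      A * ((paperM ℤ q l).map (Int.cast : ℤ → ℤ_[p])) * B =
        Matrix.of (fun (i : Fin (q - l + 1)) (j : Fin (q - 1)) => if (j : ℕ) = (i : ℕ) then e i else 0) ∧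
      (∃! i, ¬ IsUnit (e i)) ∧
      ∀ i, ¬ IsUnit (e i) → e i ≠ 0 ∧ (p : ℤ_[p]) ∣ e i) ∧
    ((paperM ℤ q l).map (Int.cast : ℤ → ℚ)).rank = q - l + 1 ∧
    ((paperM ℤ q l).map (Int.cast : ℤ → ZMod p)).rank = q - l := by
  have hl2 : 2 ≤ l := by omega
  have hmn : q - l < q - 1 := by omega
  obtain ⟨A, B, δ, hA, hB, hAMB, hδ0, hδI⟩ :=
    (paperM_succRowsUnitriangular ℤ_[p]).exists_smith_form_of_row_zero_mem hmn
      (paperM_row_linearIndependent ℤ_[p] hl2 hlq) _ _ (paperM_padicInt_row_zero_sub_mem p hq hlq)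
  have hpδ : (p : ℤ_[p]) ∣ δ := Ideal.mem_span_singleton.mp hδI
  have hδ : ¬IsUnit δ := fun h => PadicInt.p_nonunit (isUnit_of_dvd_unit hpδ h)
  refine ⟨⟨A, B, fun i => if i = Fin.last _ then δ else 1, hA, hB, ?_, ?_, fun i hi => ?_⟩, ?_, ?_⟩
  · rwa [paperM_map_intCast]
  · refine ⟨Fin.last _, by simpa using hδ, fun i hi => ?_⟩
    by_contra h
    simp [h] at hi
  · by_cases h : i = Fin.last _
    · simpa [h] using And.intro hδ0 hpδ
    · simp [h] at hi
  · rw [paperM_map_intCast, (paperM_row_linearIndependent ℚ hl2 hlq).rank_matrix, Fintype.card_fin]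
  · rw [paperM_map_intCast]
    exact (paperM_succRowsUnitriangular _).rank_eq hmn.le (paperM_row_zero_mem_span _ p hq hlq)

/-- Let `p` be prime, `q = p^d` (`d ≥ 1`), `3 ≤ l ≤ q`, and
let `M_ℤ` be the integer matrix of the paper. Then the Smith normal form of
`M_ℤ` over the p-adic integers `ℤ_p` has `q - l` unit elementary divisors and
exactly one non-unit elementary divisor, which is nonzero and divisible by `p`
(equivalently, `M_ℤ ⊗ ℚ` has rank `q - l + 1` while `M_ℤ ⊗ F_p` has rank
`q - l`). -/
theorem paperM_smith_normal_form (p : ℕ) [Fact p.Prime] (d l q : ℕ) (hd : 0 < d)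
    (hq : q = p ^ d) (hl : 3 ≤ l) (hlq : l ≤ q) :
    (∃ (A : Matrix (Fin (q - l + 1)) (Fin (q - l + 1)) ℤ_[p])
       (B : Matrix (Fin (q - 1)) (Fin (q - 1)) ℤ_[p])
       (e : Fin (q - l + 1) → ℤ_[p]),
      IsUnit A ∧ IsUnit B ∧
      A * ((paperM ℤ q l).map (Int.cast : ℤ → ℤ_[p])) * B =
        Matrix.of (fun (i : Fin (q - l + 1)) (j : Fin (q - 1)) => if (j : ℕ) = (i : ℕ) then e i else 0) ∧
      (∃! i, ¬ IsUnit (e i)) ∧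
      ∀ i, ¬ IsUnit (e i) → e i ≠ 0 ∧ (p : ℤ_[p]) ∣ e i) ∧
    ((paperM ℤ q l).map (Int.cast : ℤ → ℚ)).rank = q - l + 1 ∧
    ((paperM ℤ q l).map (Int.cast : ℤ → ZMod p)).rank = q - l :=
  paperM_smith_normal_form_general p d l q hq hl hlq
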